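/- Assume the association scheme S has thin thin residue, i.e. O^ϑ(S) ⊆ O_ϑ(S). Let ⟨v⟩_𝔽 be a trivial 𝔽S-submodule of the regular 𝔽S-module. If R_0 ∈ U(v), then ⟨S_{p'}⟩ ⊆ U(v), where S_{p'} = {R_i ∈ S : p ∤ k_i} and ⟨S_{p'}⟩ is the smallest closed subset containing S_{p'}. -/
import Mathlib


open scoped Classical

/-- An association scheme of class `d` on a nonempty finite set `X`:
a partition of `X × X` into nonempty relations `r 0, …, r d` with
`r 0` the diagonal, closed under converse (`star`), and with
intersection numbers `pNum i j k`. -/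
structure AssocScheme (X : Type*) [Fintype X] [Nonempty X] (d : ℕ) where
  r : Fin (d + 1) → Set (X × X)
  r_nonempty : ∀ i, (r i).Nonempty
  existsUnique_rel : ∀ q : X × X, ∃! i, q ∈ r i
  r_zero : r 0 = {q : X × X | q.1 = q.2}
  star : Fin (d + 1) → Fin (d + 1)
  mem_star : ∀ (i : Fin (d + 1)) (q : X × X), q ∈ r (star i) ↔ (q.2, q.1) ∈ r i
  pNum : Fin (d + 1) → Fin (d + 1) → Fin (d + 1) → ℕ
  ncard_eq : ∀ (i j k : Fin (d + 1)), ∀ q ∈ r k,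
    {z : X | (q.1, z) ∈ r i ∧ (z, q.2) ∈ r j}.ncard = pNum i j k

namespace AssocScheme

variable {X : Type*} [Fintype X] [Nonempty X] {d : ℕ}

/-- The valency `k_i = p_{i i*}^0` of the relation `R_i`. -/
def val (S : AssocScheme X d) (i : Fin (d + 1)) : ℕ := S.pNum i (S.star i) 0

/-- The complex product `UV = {R_k : p_{uv}^k > 0 for some R_u ∈ U, R_v ∈ V}`. -/
def cmul (S : AssocScheme X d) (U V : Set (Fin (d + 1))) : Set (Fin (d + 1)) :=
  {k | ∃ u ∈ U, ∃ v ∈ V, 0 < S.pNum u v k}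

/-- A nonempty subset `T` is closed if `T*T ⊆ T`. -/
def IsClosedSubset (S : AssocScheme X d) (T : Set (Fin (d + 1))) : Prop :=
  T.Nonempty ∧ S.cmul (S.star '' T) T ⊆ T

/-- The thin radical `O_ϑ(S) = {R_i : k_i = 1}`. -/
def thinRadical (S : AssocScheme X d) : Set (Fin (d + 1)) := {i | S.val i = 1}

/-- A closed subset `T` is strongly normal if `R_{i*} T R_i ⊆ T` for all `i`. -/
def IsStronglyNormal (S : AssocScheme X d) (T : Set (Fin (d + 1))) : Prop :=
  S.IsClosedSubset T ∧ ∀ i : Fin (d + 1), S.cmul (S.cmul {S.star i} T) {i} ⊆ T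

/-- The thin residue `O^ϑ(S)`: the intersection of all strongly normal closed subsets. -/
def thinResidue (S : AssocScheme X d) : Set (Fin (d + 1)) :=
  ⋂₀ {T | S.IsStronglyNormal T}

/-- `⟨H⟩`: the intersection of all closed subsets containing `H`. -/
def closure (S : AssocScheme X d) (H : Set (Fin (d + 1))) : Set (Fin (d + 1)) :=
  ⋂₀ {T | S.IsClosedSubset T ∧ H ⊆ T}

/-- The adjacency matrix `A̅_i` of `R_i`, with entries in `𝔽`. -/
noncomputable def adj (S : AssocScheme X d) (𝔽 : Type*) [Field 𝔽] (i : Fin (d + 1)) :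
    Matrix X X 𝔽 :=
  Matrix.of fun x y => if (x, y) ∈ S.r i then 1 else 0

/-- `v` spans a trivial `𝔽S`-submodule of the regular `𝔽S`-module:
`v` is a nonzero element of `𝔽S` with `A̅_i v = k̅_i v` for all `i`. -/
def IsTrivialVector (S : AssocScheme X d) (𝔽 : Type*) [Field 𝔽] (v : Matrix X X 𝔽) : Prop :=
  v ≠ 0 ∧ v ∈ Submodule.span 𝔽 (Set.range (S.adj 𝔽)) ∧
    ∀ i : Fin (d + 1), S.adj 𝔽 i * v = (S.val i : 𝔽) • v

/-- `S` is `p`-transitive over `𝔽` (of characteristic `p`) if the regular `𝔽S`-module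
contains a unique trivial `𝔽S`-submodule. -/
def IsPTransitive (S : AssocScheme X d) (𝔽 : Type*) [Field 𝔽] : Prop :=
  ∃! W : Submodule 𝔽 (Matrix X X 𝔽),
    ∃ v : Matrix X X 𝔽, S.IsTrivialVector 𝔽 v ∧ W = Submodule.span 𝔽 {v}

/-- A subset `T ⊆ S` is singular if `O_ϑ(S) ⊆ T` and
`R_x R_{y*} R_y R_z ⊆ T` for all `R_x ∈ O_ϑ(S)`, `R_y ∈ S`, `R_z ∈ T`. -/
def IsSingular (S : AssocScheme X d) (T : Set (Fin (d + 1))) : Prop :=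
  S.thinRadical ⊆ T ∧ ∀ x ∈ S.thinRadical, ∀ y : Fin (d + 1), ∀ z ∈ T,
    S.cmul (S.cmul (S.cmul {x} {S.star y}) {y}) {z} ⊆ T

/-- `S_{p'} = {R_i ∈ S : p ∤ k_i}`. -/
def pPrimePart (S : AssocScheme X d) (p : ℕ) : Set (Fin (d + 1)) :=
  {i | ¬ p ∣ S.val i}

variable (S : AssocScheme X d)

lemma rel_eq {q : X × X} {i j : Fin (d + 1)} (hi : q ∈ S.r i) (hj : q ∈ S.r j) : i = j :=
  ((S.existsUnique_rel q).unique hi hj)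

lemma star_star (i : Fin (d + 1)) : S.star (S.star i) = i := by
  obtain ⟨q, hq⟩ := S.r_nonempty i
  have h : q ∈ S.r (S.star (S.star i)) := by
    rw [S.mem_star, S.mem_star]
    simpa using hq
  exact S.rel_eq h hq

lemma star_zero : S.star 0 = 0 := by
  obtain ⟨q, hq⟩ := S.r_nonempty (S.star 0)
  have h1 : (q.2, q.1) ∈ S.r 0 := (S.mem_star 0 q).mp hq
  have h2 : q ∈ S.r 0 := by
    rw [S.r_zero] at h1 ⊢
    exact h1.symm
  exact S.rel_eq hq h2

lemma pNum_pos {i j k : Fin (d + 1)} {x y z : X} (hk : (x, y) ∈ S.r k)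
    (hi : (x, z) ∈ S.r i) (hj : (z, y) ∈ S.r j) : 0 < S.pNum i j k := by
  rw [← S.ncard_eq i j k (x, y) hk]
  exact (Set.ncard_pos (Set.toFinite _)).mpr ⟨z, hi, hj⟩

lemma exists_mid {i j k : Fin (d + 1)} {x y : X} (hk : (x, y) ∈ S.r k)
    (h : 0 < S.pNum i j k) : ∃ z, (x, z) ∈ S.r i ∧ (z, y) ∈ S.r j := by
  rw [← S.ncard_eq i j k (x, y) hk] at h
  obtain ⟨z, hz⟩ := (Set.ncard_pos (Set.toFinite _)).mp h
  exact ⟨z, hz⟩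

lemma cyclic {i j k : Fin (d + 1)} (h : 0 < S.pNum i j k) :
    0 < S.pNum (S.star i) k j := by
  obtain ⟨q, hq⟩ := S.r_nonempty k
  have hq' : (q.1, q.2) ∈ S.r k := by simpa using hq
  obtain ⟨z, hi, hj⟩ := S.exists_mid hq' h
  exact S.pNum_pos hj ((S.mem_star i (z, q.1)).mpr hi) hq'

lemma cyclic' {i j k : Fin (d + 1)} (h : 0 < S.pNum (S.star i) k j) :
    0 < S.pNum i j k := by
  have := S.cyclic h
  rwa [S.star_star] at this

lemma pNum_zero_right_pos (i : Fin (d + 1)) : 0 < S.pNum i 0 i := by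
  obtain ⟨⟨x, y⟩, hq⟩ := S.r_nonempty i
  have h0 : (y, y) ∈ S.r 0 := by rw [S.r_zero]; rfl
  exact S.pNum_pos hq hq h0

lemma pNum_star_self_zero_pos (i : Fin (d + 1)) : 0 < S.pNum (S.star i) i 0 := by
  obtain ⟨⟨x, y⟩, hq⟩ := S.r_nonempty i
  have h0 : (y, y) ∈ S.r 0 := by rw [S.r_zero]; rfl
  exact S.pNum_pos h0 ((S.mem_star i (y, x)).mpr hq) hq

lemma ncard_out (i : Fin (d + 1)) (x : X) : {z | (x, z) ∈ S.r i}.ncard = S.val i := by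
  have h0 : ((x, x) : X × X) ∈ S.r 0 := by rw [S.r_zero]; rfl
  have h := S.ncard_eq i (S.star i) 0 (x, x) h0
  show _ = S.pNum i (S.star i) 0
  rw [← h]
  congr 1
  ext z
  simp only [Set.mem_setOf_eq]
  exact ⟨fun h => ⟨h, (S.mem_star i (z, x)).mpr h⟩, fun h => h.1⟩

omit [Nonempty X] in
lemma ncard_setOf (P : X → Prop) : {z | P z}.ncard = (Finset.univ.filter P).card := by
  rw [← Set.toFinset_setOf, Set.ncard_eq_toFinset_card']

lemma sum_pNum (i k : Fin (d + 1)) : ∑ j, S.pNum i j k = S.val i := by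
  obtain ⟨⟨x, y⟩, hq⟩ := S.r_nonempty k
  have hcount : ∀ j, S.pNum i j k =
      (Finset.univ.filter (fun z => (x, z) ∈ S.r i ∧ (z, y) ∈ S.r j)).card := by
    intro j
    rw [← S.ncard_eq i j k (x, y) hq, ncard_setOf]
    congr 1; ext z; simp
  have hout : S.val i = (Finset.univ.filter (fun z => (x, z) ∈ S.r i)).card := by
    rw [← S.ncard_out i x, ncard_setOf]
  rw [hout]
  rw [Finset.card_eq_sum_card_fiberwise
    (f := fun z => (S.existsUnique_rel (z, y)).choose) (t := Finset.univ)
    (fun z _ => Finset.mem_univ _)]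
  apply Finset.sum_congr rfl
  intro j _
  rw [hcount j]
  congr 1
  ext z
  simp only [Finset.mem_filter, Finset.mem_univ, true_and, Finset.filter_filter]
  constructor
  · rintro ⟨h1, h2⟩
    exact ⟨h1, S.rel_eq (S.existsUnique_rel (z, y)).choose_spec.1 h2⟩
  · rintro ⟨h1, h2⟩
    exact ⟨h1, h2 ▸ (S.existsUnique_rel (z, y)).choose_spec.1⟩

lemma thin_of_pNum_star_self (httr : S.thinResidue ⊆ S.thinRadical)
    {i t : Fin (d + 1)} (h : 0 < S.pNum (S.star i) i t) : S.val t = 1 := by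
  apply httr
  refine Set.mem_sInter.mpr fun T hT => ?_
  obtain ⟨⟨⟨s, hs⟩, hclosed⟩, hnorm⟩ := hT
  have h0 : (0 : Fin (d + 1)) ∈ T :=
    hclosed ⟨S.star s, ⟨s, hs, rfl⟩, s, hs, S.pNum_star_self_zero_pos s⟩
  exact hnorm i ⟨S.star i, ⟨S.star i, rfl, 0, h0, S.pNum_zero_right_pos (S.star i)⟩, i, rfl, h⟩

end AssocScheme

/-- Assume `O^ϑ(S) ⊆ O_ϑ(S)`. If `⟨v⟩_𝔽` is a trivial `𝔽S`-submodule of the regular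
`𝔽S`-module with `R_0 ∈ U(v)`, then `⟨S_{p'}⟩ ⊆ U(v)`. -/
theorem closure_pPrimePart_subset_support
    {X : Type*} [Fintype X] [Nonempty X] {d : ℕ} (S : AssocScheme X d)
    (𝔽 : Type*) [Field 𝔽] (p : ℕ) [Fact p.Prime] [CharP 𝔽 p]
    (httr : S.thinResidue ⊆ S.thinRadical)
    (c : Fin (d + 1) → 𝔽) (v : Matrix X X 𝔽)
    (hv : v = ∑ i : Fin (d + 1), c i • S.adj 𝔽 i)
    (htriv : S.IsTrivialVector 𝔽 v)
    (h0 : c 0 ≠ 0) :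
    S.closure (S.pPrimePart p) ⊆ {j | c j ≠ 0} := by
  classical
  -- The fundamental identity: ∑_j p_{ij}^k c_j = k_i c_k in 𝔽.
  have key : ∀ i k : Fin (d + 1), ∑ j, (S.pNum i j k : 𝔽) * c j = (S.val i : 𝔽) * c k := by
    intro i k
    obtain ⟨⟨x, y⟩, hq⟩ := S.r_nonempty k
    have h : (S.adj 𝔽 i * v) x y = ((S.val i : 𝔽) • v) x y := by rw [htriv.2.2 i]
    have hvz : ∀ z w : X, v z w = ∑ j, c j * (if (z, w) ∈ S.r j then (1 : 𝔽) else 0) := by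
      intro z w; rw [hv]; simp [Matrix.sum_apply, AssocScheme.adj]
    have hent : ∀ j : Fin (d + 1),
        ∑ z, (if (x, z) ∈ S.r i then (1 : 𝔽) else 0) * (if (z, y) ∈ S.r j then (1 : 𝔽) else 0)
          = (S.pNum i j k : 𝔽) := by
      intro j
      have heach : ∀ z : X,
          (if (x, z) ∈ S.r i then (1 : 𝔽) else 0) * (if (z, y) ∈ S.r j then (1 : 𝔽) else 0)
            = if ((x, z) ∈ S.r i ∧ (z, y) ∈ S.r j) then (1 : 𝔽) else 0 := by
        intro z
        by_cases h1 : (x, z) ∈ S.r i <;> by_cases h2 : (z, y) ∈ S.r j <;> simp [h1, h2]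
      rw [Finset.sum_congr rfl fun z _ => heach z, Finset.sum_boole,
        ← S.ncard_eq i j k (x, y) hq, AssocScheme.ncard_setOf]
      congr 2
      ext z
      simp
    have hL : (S.adj 𝔽 i * v) x y = ∑ j, (S.pNum i j k : 𝔽) * c j := by
      rw [Matrix.mul_apply]
      simp only [hvz, AssocScheme.adj, Matrix.of_apply]
      calc ∑ z, (if (x, z) ∈ S.r i then (1 : 𝔽) else 0) *
              ∑ j, c j * (if (z, y) ∈ S.r j then (1 : 𝔽) else 0)
          = ∑ z, ∑ j, c j * ((if (x, z) ∈ S.r i then (1 : 𝔽) else 0) *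
              (if (z, y) ∈ S.r j then (1 : 𝔽) else 0)) := by
            refine Finset.sum_congr rfl fun z _ => ?_
            rw [Finset.mul_sum]
            exact Finset.sum_congr rfl fun j _ => by ring
        _ = ∑ j, ∑ z, c j * ((if (x, z) ∈ S.r i then (1 : 𝔽) else 0) *
              (if (z, y) ∈ S.r j then (1 : 𝔽) else 0)) := Finset.sum_comm
        _ = ∑ j, c j * (S.pNum i j k : 𝔽) := by
            refine Finset.sum_congr rfl fun j _ => ?_
            rw [← Finset.mul_sum, hent j]
        _ = ∑ j, (S.pNum i j k : 𝔽) * c j := by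
            exact Finset.sum_congr rfl fun j _ => mul_comm _ _
    have hR : ((S.val i : 𝔽) • v) x y = (S.val i : 𝔽) * c k := by
      rw [Matrix.smul_apply, smul_eq_mul]
      congr 1
      rw [hvz]
      rw [Finset.sum_eq_single k]
      · simp [hq]
      · intro j _ hjk
        have hnot : (x, y) ∉ S.r j := fun hmem => hjk (S.rel_eq hmem hq)
        simp [hnot]
      · simp
    rw [hL, hR] at h
    exact h
  -- Left multiplication by a thin element preserves coefficients.
  have thin_inv : ∀ t j k : Fin (d + 1), S.val t = 1 → 0 < S.pNum t j k → c k = c j := by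
    intro t j k ht hp
    have hsum := S.sum_pNum t k
    rw [ht] at hsum
    have hsplit : S.pNum t j k + ∑ j' ∈ Finset.univ.erase j, S.pNum t j' k = 1 := by
      rw [Finset.add_sum_erase Finset.univ (fun j' => S.pNum t j' k) (Finset.mem_univ j)]
      exact hsum
    have hone : S.pNum t j k = 1 := by omega
    have hrest : ∑ j' ∈ Finset.univ.erase j, S.pNum t j' k = 0 := by omega
    have hzero : ∀ j' ≠ j, S.pNum t j' k = 0 := by
      intro j' hj'
      exact (Finset.sum_eq_zero_iff.mp hrest) j' (Finset.mem_erase.mpr ⟨hj', Finset.mem_univ _⟩)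
    have hk := key t k
    rw [ht, Finset.sum_eq_single j] at hk
    · rw [hone] at hk
      simpa using hk.symm
    · intro j' _ hj'
      rw [hzero j' hj']
      simp
    · simp
  -- Any two relations in the complex product i* k have the same coefficient.
  have same : ∀ i k l j : Fin (d + 1), 0 < S.pNum (S.star i) k l → 0 < S.pNum (S.star i) k j →
      c j = c l := by
    intro i k l j h1 h2
    obtain ⟨⟨x, y⟩, hxy⟩ := S.r_nonempty l
    obtain ⟨z, hxz, hzy⟩ := S.exists_mid hxy h1
    have h3 : 0 < S.pNum i j k := S.cyclic' h2
    obtain ⟨w, hzw, hwy⟩ := S.exists_mid hzy h3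
    obtain ⟨t, hxw, -⟩ := S.existsUnique_rel (x, w)
    have ht : 0 < S.pNum (S.star i) i t := S.pNum_pos hxw hxz hzw
    have hthin : S.val t = 1 := S.thin_of_pNum_star_self httr ht
    have hp : 0 < S.pNum t j l := S.pNum_pos hxy hxw hwy
    exact (thin_inv t j l hthin hp).symm
  -- The candidate closed subset.
  set T : Set (Fin (d + 1)) :=
    {m | ∀ k l : Fin (d + 1), 0 < S.pNum (S.star m) k l → c l = c k} with hTdef
  have hmemT : (0 : Fin (d + 1)) ∈ T := by
    intro k l h
    rw [S.star_zero] at h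
    obtain ⟨⟨x, y⟩, hxy⟩ := S.r_nonempty l
    obtain ⟨z, hxz, hzy⟩ := S.exists_mid hxy h
    rw [S.r_zero] at hxz
    have hzx : x = z := hxz
    subst hzx
    rw [S.rel_eq hzy hxy]
  have hclosedT : S.IsClosedSubset T := by
    refine ⟨⟨0, hmemT⟩, ?_⟩
    rintro m ⟨u, ⟨a, haT, rfl⟩, b, hbT, hm⟩
    intro k l hkl
    obtain ⟨⟨x, y⟩, hxy⟩ := S.r_nonempty l
    obtain ⟨z, hxz, hzy⟩ := S.exists_mid hxy hkl
    have hzx : (z, x) ∈ S.r m := (S.mem_star m (x, z)).mp hxz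
    obtain ⟨w, hzw, hwx⟩ := S.exists_mid hzx hm
    obtain ⟨s, hws, -⟩ := S.existsUnique_rel (w, y)
    have hwz : (w, z) ∈ S.r a := (S.mem_star a (z, w)).mp hzw
    have h1 : 0 < S.pNum a k s := S.pNum_pos hws hwz hzy
    have h2 : 0 < S.pNum b l s := S.pNum_pos hws hwx hxy
    have hc1 : c k = c s := haT s k (S.cyclic h1)
    have hc2 : c l = c s := hbT s l (S.cyclic h2)
    rw [hc1, hc2]
  have hSp : S.pPrimePart p ⊆ T := by
    intro i hi k l hkl
    have hval : (S.val i : 𝔽) ≠ 0 := fun hc => hi ((CharP.cast_eq_zero_iff 𝔽 p _).mp hc)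
    have h1 : ∑ j, (S.pNum i j k : 𝔽) * c j = ∑ j, (S.pNum i j k : 𝔽) * c l := by
      refine Finset.sum_congr rfl fun j _ => ?_
      by_cases hj : 0 < S.pNum i j k
      · rw [same i k l j hkl (S.cyclic hj)]
      · rw [Nat.eq_zero_of_not_pos hj]
        simp
    have h2 := key i k
    rw [h1, ← Finset.sum_mul, ← Nat.cast_sum, S.sum_pNum i k] at h2
    exact mul_left_cancel₀ hval h2
  have hTc : T ⊆ {j | c j ≠ 0} := by
    intro m hm
    have h := hm m 0 (S.pNum_star_self_zero_pos m)
    simpa [← h] using h0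
  have hmem : T ∈ {T' | S.IsClosedSubset T' ∧ S.pPrimePart p ⊆ T'} := ⟨hclosedT, hSp⟩
  exact fun j hj => hTc (Set.sInter_subset_of_mem hmem hj)
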